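/- Second step of the singular-part recursion, case 2: assume A = Φ * Ψ in AddMonoidAlgebra ℝ ℝ with data as in the context and N ≥ 2, L ≥ 2, K ≥ 2. If β₂ = ζ₁ + κ₂ but α₂ ≠ φ₁·ψ₂, then β₂ = ζ₂ + κ₁ as well and α₂ = φ₁·ψ₂ + φ₂·ψ₁; equivalently, ζ₂ = β₂ − κ₁ and φ₂ = (α₂ − φ₁ψ₂)/ψ₁. -/

import Mathlib

/-!
Comparing coefficients in `A = Φ * Ψ`, every point `ζₗ + κₖ` carries the positive mass
`Σ_{ζᵢ + κⱼ = ζₗ + κₖ} φᵢ ψⱼ`, so it is one of the `βₙ`. As `β₁ ≤ ζ₁ + κ₁ < ζ₂ + κ₁`, the point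
`ζ₂ + κ₁` is a `βₙ` above `β₁`, so `ζ₂ + κ₁ ≤ β₂` forces equality; strict monotonicity then leaves
`(1, 2)` and possibly `(2, 1)` as the only pairs `(l, k)` with `ζₗ + κₖ = β₂ = ζ₁ + κ₂`. Hence
`α₂ = φ₁ψ₂ + [ζ₂ + κ₁ = β₂] φ₂ψ₁`, and `α₂ ≠ φ₁ψ₂` forces the second pair to occur.
Indices here are the paper's; the `Fin` indices in the code are one lower.
-/

open Finset

namespace AddMonoidAlgebra

variable {R G ι ι' : Type*} [Semiring R] [Fintype ι]

theorem coeff_sum_single_apply [DecidableEq G] (β : ι → G) (α : ι → R) (x : G) :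
    (∑ i, single (β i) (α i)).coeff x = ∑ i, if β i = x then α i else 0 := by
  simp [Finsupp.single_apply]

theorem coeff_sum_single_of_injective {β : ι → G} (hβ : β.Injective) (α : ι → R) (m : ι) :
    (∑ i, single (β i) (α i)).coeff (β m) = α m := by
  classical
  rw [coeff_sum_single_apply]
  simp [hβ.eq_iff]

theorem exists_eq_of_coeff_sum_single_ne_zero (β : ι → G) (α : ι → R) {x : G}
    (h : (∑ i, single (β i) (α i)).coeff x ≠ 0) : ∃ i, β i = x := by
  classical
  rw [coeff_sum_single_apply] at h
  by_contra! hx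
  simp [hx] at h

theorem coeff_sum_single_pos [PartialOrder R] [IsOrderedAddMonoid R] (β : ι → G) {α : ι → R}
    (hα : ∀ i, 0 ≤ α i) {m : ι} (hm : 0 < α m) : 0 < (∑ i, single (β i) (α i)).coeff (β m) := by
  classical
  rw [coeff_sum_single_apply]
  refine hm.trans_le ?_
  convert single_le_sum (f := fun i ↦ if β i = β m then α i else 0) (fun i _ ↦ ?_) (mem_univ m)
  · simp
  · split_ifs <;> simp [hα]

theorem sum_single_mul_sum_single [Add G] [Fintype ι'] (ζ : ι → G) (φ : ι → R) (κ : ι' → G)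
    (ψ : ι' → R) :
    (∑ l, single (ζ l) (φ l)) * (∑ k, single (κ k) (ψ k)) =
      ∑ p : ι × ι', single (ζ p.1 + κ p.2) (φ p.1 * ψ p.2) := by
  simp only [sum_mul_sum, single_mul_single, ← sum_product', univ_product_univ]

end AddMonoidAlgebra

theorem StrictMono.add_eq_add_zero_one_iff {G : Type*} [AddCommMonoid G] [LinearOrder G]
    [IsOrderedCancelAddMonoid G] {L K : ℕ} (hL : 2 ≤ L) (hK : 2 ≤ K) {ζ : Fin L → G}
    {κ : Fin K → G} (hζ : StrictMono ζ) (hκ : StrictMono κ)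
    (hgap : ζ ⟨1, hL⟩ + κ ⟨0, by omega⟩ ≤ ζ ⟨0, by omega⟩ + κ ⟨1, hK⟩ →
      ζ ⟨1, hL⟩ + κ ⟨0, by omega⟩ = ζ ⟨0, by omega⟩ + κ ⟨1, hK⟩)
    (l : Fin L) (k : Fin K) :
    ζ l + κ k = ζ ⟨0, by omega⟩ + κ ⟨1, hK⟩ ↔
      (l, k) = (⟨0, by omega⟩, ⟨1, hK⟩) ∨
        (l, k) = (⟨1, hL⟩, ⟨0, by omega⟩) ∧
          ζ ⟨1, hL⟩ + κ ⟨0, by omega⟩ = ζ ⟨0, by omega⟩ + κ ⟨1, hK⟩ := by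
  simp only [Prod.mk.injEq, and_assoc]
  refine ⟨fun h ↦ ?_, ?_⟩
  · rcases Nat.eq_zero_or_pos l.val with hl | hl
    · have hl0 : l = ⟨0, by omega⟩ := Fin.ext hl
      rw [hl0] at h
      exact .inl ⟨hl0, hκ.injective (add_left_cancel h)⟩
    obtain rfl : k = ⟨0, by omega⟩ := by
      refine Fin.ext (Nat.eq_zero_of_not_pos fun hk ↦ h.not_gt ?_)
      exact add_lt_add_of_lt_of_le (hζ (Fin.mk_lt_of_lt_val hl)) (hκ.monotone (Fin.mk_le_of_le_val hk))
    have h10 := hgap (h ▸ add_le_add_left (hζ.monotone (Fin.mk_le_of_le_val hl)) _)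
    obtain rfl : l = ⟨1, hL⟩ := hζ.injective (add_right_cancel (h.trans h10.symm))
    exact .inr ⟨rfl, rfl, h10⟩
  · rintro (⟨rfl, rfl⟩ | ⟨rfl, rfl, h⟩)
    · rfl
    · exact h

theorem StrictMono.sum_ite_add_eq_add_zero_one {G M : Type*} [AddCommMonoid G] [LinearOrder G]
    [IsOrderedCancelAddMonoid G] [AddCommMonoid M] {L K : ℕ} (hL : 2 ≤ L) (hK : 2 ≤ K)
    {ζ : Fin L → G} {κ : Fin K → G} (hζ : StrictMono ζ) (hκ : StrictMono κ)
    (hgap : ζ ⟨1, hL⟩ + κ ⟨0, by omega⟩ ≤ ζ ⟨0, by omega⟩ + κ ⟨1, hK⟩ →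
      ζ ⟨1, hL⟩ + κ ⟨0, by omega⟩ = ζ ⟨0, by omega⟩ + κ ⟨1, hK⟩)
    [DecidableEq G] (f : Fin L × Fin K → M) :
    (∑ p, if ζ p.1 + κ p.2 = ζ ⟨0, by omega⟩ + κ ⟨1, hK⟩ then f p else 0) =
      f (⟨0, by omega⟩, ⟨1, hK⟩) +
        if ζ ⟨1, hL⟩ + κ ⟨0, by omega⟩ = ζ ⟨0, by omega⟩ + κ ⟨1, hK⟩ then
          f (⟨1, hL⟩, ⟨0, by omega⟩) else 0 := by
  rw [sum_congr rfl fun p _ ↦ if_congr (hζ.add_eq_add_zero_one_iff hL hK hκ hgap p.1 p.2) rfl rfl]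
  by_cases h : ζ ⟨1, hL⟩ + κ ⟨0, by omega⟩ = ζ ⟨0, by omega⟩ + κ ⟨1, hK⟩
  · have hne : ((⟨0, by omega⟩, ⟨1, hK⟩) : Fin L × Fin K) ≠ (⟨1, hL⟩, ⟨0, by omega⟩) := by
      simp [Fin.ext_iff]
    rw [Fintype.sum_eq_add _ _ hne fun p hp ↦ by simp [hp.1, hp.2]]
    simp [h, hne]
  · simp [h]

theorem StrictMono.eq_one_of_lt_of_le {α : Type*} [Preorder α] {N : ℕ} (hN : 2 ≤ N)
    {β : Fin N → α} (hβ : StrictMono β) {n : Fin N} (h0 : β ⟨0, by omega⟩ < β n)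
    (h1 : β n ≤ β ⟨1, hN⟩) : n = ⟨1, hN⟩ := by
  have := hβ.lt_iff_lt.mp h0
  have := hβ.le_iff_le.mp h1
  ext
  simp only [Fin.lt_def, Fin.le_def] at *
  omega

open AddMonoidAlgebra in
/-- Second step of the singular-part recursion, case 2: if `A = Φ * Ψ` with the
leaf-peeling singular data, `β₂ = ζ₁ + κ₂` but `α₂ ≠ φ₁·ψ₂`, then also
`β₂ = ζ₂ + κ₁` and `α₂ = φ₁·ψ₂ + φ₂·ψ₁`; equivalently, `ζ₂ = β₂ − κ₁` and
`φ₂ = (α₂ − φ₁ψ₂)/ψ₁`. -/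
theorem singular_recursion_second_step_case2
    (N L K : ℕ) (hN : 2 ≤ N) (hL : 2 ≤ L) (hK : 2 ≤ K)
    (β : Fin N → ℝ) (ζ : Fin L → ℝ) (κ : Fin K → ℝ)
    (hβ : StrictMono β) (hζ : StrictMono ζ) (hκ : StrictMono κ)
    (α : Fin N → ℝ) (φ : Fin L → ℝ) (ψ : Fin K → ℝ)
    (hφ : ∀ l, 0 < φ l) (hψ : ∀ k, 0 < ψ k)
    (A Φ Ψ : AddMonoidAlgebra ℝ ℝ)
    (hA : A = ∑ n, AddMonoidAlgebra.single (β n) (α n))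
    (hΦ : Φ = ∑ l, AddMonoidAlgebra.single (ζ l) (φ l))
    (hΨ : Ψ = ∑ k, AddMonoidAlgebra.single (κ k) (ψ k))
    (hSing : A = Φ * Ψ)
    (hcase : β ⟨1, hN⟩ = ζ ⟨0, by omega⟩ + κ ⟨1, hK⟩)
    (hcase' : α ⟨1, hN⟩ ≠ φ ⟨0, by omega⟩ * ψ ⟨1, hK⟩) :
    β ⟨1, hN⟩ = ζ ⟨1, hL⟩ + κ ⟨0, by omega⟩ ∧
      α ⟨1, hN⟩ = φ ⟨0, by omega⟩ * ψ ⟨1, hK⟩ + φ ⟨1, hL⟩ * ψ ⟨0, by omega⟩ ∧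
      ζ ⟨1, hL⟩ = β ⟨1, hN⟩ - κ ⟨0, by omega⟩ ∧
      φ ⟨1, hL⟩ = (α ⟨1, hN⟩ - φ ⟨0, by omega⟩ * ψ ⟨1, hK⟩) / ψ ⟨0, by omega⟩ := by
  classical
  have hprod : A = ∑ p : Fin L × Fin K, single (ζ p.1 + κ p.2) (φ p.1 * ψ p.2) := by
    rw [hSing, hΦ, hΨ, sum_single_mul_sum_single]
  have hmem (l : Fin L) (k : Fin K) : ∃ n, β n = ζ l + κ k := by
    refine exists_eq_of_coeff_sum_single_ne_zero β α (hA ▸ hprod ▸ ?_)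
    exact (coeff_sum_single_pos (fun p : Fin L × Fin K ↦ ζ p.1 + κ p.2)
      (fun p ↦ (mul_pos (hφ p.1) (hψ p.2)).le) (m := (l, k)) (mul_pos (hφ l) (hψ k))).ne'
  have hgap : ζ ⟨1, hL⟩ + κ ⟨0, by omega⟩ ≤ ζ ⟨0, by omega⟩ + κ ⟨1, hK⟩ →
      ζ ⟨1, hL⟩ + κ ⟨0, by omega⟩ = ζ ⟨0, by omega⟩ + κ ⟨1, hK⟩ := fun hle ↦ by
    obtain ⟨m, hm⟩ := hmem ⟨1, hL⟩ ⟨0, by omega⟩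
    obtain ⟨n, hn⟩ := hmem ⟨0, by omega⟩ ⟨0, by omega⟩
    have hlt : β ⟨0, by omega⟩ < β m := calc
      β ⟨0, by omega⟩ ≤ β n := hβ.monotone (Fin.mk_le_of_le_val (Nat.zero_le _))
      _ = ζ ⟨0, by omega⟩ + κ ⟨0, by omega⟩ := hn
      _ < ζ ⟨1, hL⟩ + κ ⟨0, by omega⟩ := add_lt_add_left (hζ (Fin.mk_lt_mk.mpr one_pos)) _
      _ = β m := hm.symm
    rw [← hcase, ← hm] at hle ⊢
    rw [hβ.eq_one_of_lt_of_le hN hlt hle]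
  have hα₂ : α ⟨1, hN⟩ = φ ⟨0, by omega⟩ * ψ ⟨1, hK⟩ +
      if ζ ⟨1, hL⟩ + κ ⟨0, by omega⟩ = β ⟨1, hN⟩ then φ ⟨1, hL⟩ * ψ ⟨0, by omega⟩ else 0 := by
    rw [← coeff_sum_single_of_injective hβ.injective α, ← hA, hprod, coeff_sum_single_apply, hcase,
      hζ.sum_ite_add_eq_add_zero_one hL hK hκ hgap]
  split_ifs at hα₂ with h₁₀
  · have hψ₀ := (hψ ⟨0, by omega⟩).ne'
    exact ⟨h₁₀.symm, hα₂, eq_sub_of_add_eq h₁₀, eq_div_of_mul_eq hψ₀ (by rw [hα₂]; ring)⟩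
  · exact absurd (by simpa using hα₂) hcase'
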